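/- Let $(\Omega, \lambda)$ be a probability space, $T : \Omega \to \Omega$ a measure-preserving ergodic transformation, and $f : \Omega \to [0,\infty)$ measurable. Define $g(\omega) = f(T\omega) - f(\omega)$ and assume $g \in L^1(\Omega, \lambda)$. Then for $\lambda$-almost every $\omega$, $\lim_{n\to\infty} f(T^n \omega)/n = 0$. -/

import Mathlib

/-!
Writing `g = f ∘ T - f`, the Birkhoff sums of `g` telescope:
`f (T^[n] ω) = f ω + ∑_{k<n} g (T^[k] ω)`. So the claim is Birkhoff's ergodic theorem for `g`
together with `∫ g = 0`. The latter holds because the truncations `f_M` of `f` to `[-M, M]` are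
bounded, so `∫ (f_M ∘ T - f_M) = 0`, while `f_M ∘ T - f_M → g` with domination by `|g|`,
truncation being 1-Lipschitz.

Birkhoff's theorem is derived from Garsia's maximal ergodic theorem: if `∫ h < 0`, the set where
all Birkhoff sums of `h` are `≤ 0` has positive measure. For `∫ g < a` and `h = g - a` this set
lies in the `T`-invariant set where the Birkhoff sums `S_n g` satisfy `S_n g ≤ n a + C` for some
`C`, which therefore has full measure.
-/

open MeasureTheory Filter Topology Set

theorem birkhoffSum_comp_sub {α G : Type*} [AddCommGroup G] (T : α → α) (φ : α → G)
    (n : ℕ) (x : α) : birkhoffSum T (φ ∘ T - φ) n x = φ (T^[n] x) - φ x := by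
  simp only [birkhoffSum, Pi.sub_apply, Function.comp_apply, ← Function.iterate_succ_apply' T]
  exact Finset.sum_range_sub (fun k => φ (T^[k] x)) n

section BirkhoffMax

variable {α : Type*} (T : α → α) (h : α → ℝ)

noncomputable def birkhoffMax : ℕ → α → ℝ
  | 0 => 0
  | n + 1 => fun x => max (birkhoffMax n x) (birkhoffSum T h (n + 1) x)

variable {T h}

theorem birkhoffMax_nonneg (n : ℕ) (x : α) : 0 ≤ birkhoffMax T h n x := by
  induction n with
  | zero => rfl
  | succ n ih => exact ih.trans (le_max_left _ _)

theorem birkhoffSum_le_birkhoffMax {k n : ℕ} (hkn : k ≤ n) (x : α) :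
    birkhoffSum T h k x ≤ birkhoffMax T h n x := by
  induction n with
  | zero => simp [Nat.le_zero.mp hkn, birkhoffMax]
  | succ n ih =>
    rcases hkn.eq_or_lt with rfl | hlt
    · exact le_max_right _ _
    · exact (ih (Nat.lt_succ_iff.mp hlt)).trans (le_max_left _ _)

theorem birkhoffMax_le {n : ℕ} {x : α} {c : ℝ} (hc : 0 ≤ c)
    (hS : ∀ k ≤ n, birkhoffSum T h k x ≤ c) : birkhoffMax T h n x ≤ c := by
  induction n with
  | zero => exact hc
  | succ n ih => exact max_le (ih fun k hk => hS k (hk.trans n.le_succ)) (hS _ le_rfl)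

theorem birkhoffMax_mono (x : α) : Monotone (birkhoffMax T h · x) := fun _ _ hmn =>
  birkhoffMax_le (birkhoffMax_nonneg _ x) fun _ hk => birkhoffSum_le_birkhoffMax (hk.trans hmn) x

theorem birkhoffMax_pos_iff {n : ℕ} {x : α} :
    0 < birkhoffMax T h n x ↔ ∃ k ≤ n, 0 < birkhoffSum T h k x := by
  refine ⟨fun hpos => ?_, fun ⟨k, hkn, hk⟩ => hk.trans_le (birkhoffSum_le_birkhoffMax hkn x)⟩
  by_contra! hS
  exact hpos.not_ge (birkhoffMax_le le_rfl hS)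

theorem birkhoffMax_le_max_zero_add (n : ℕ) (x : α) :
    birkhoffMax T h n x ≤ max 0 (h x + birkhoffMax T h n (T x)) := by
  refine birkhoffMax_le (le_max_left _ _) fun k hk => ?_
  rcases k with _ | k
  · exact le_max_left _ _
  · rw [birkhoffSum_succ']
    exact le_max_of_le_right
      (add_le_add_right (birkhoffSum_le_birkhoffMax (k.le_succ.trans hk) (T x)) _)

end BirkhoffMax

section Measurability

variable {α : Type*} [MeasurableSpace α] {T : α → α} {h : α → ℝ}

theorem measurable_birkhoffSum (hT : Measurable T) (hh : Measurable h) (n : ℕ) :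
    Measurable (birkhoffSum T h n) :=
  Finset.measurable_sum _ fun k _ => hh.comp (hT.iterate k)

theorem measurable_birkhoffMax (hT : Measurable T) (hh : Measurable h) (n : ℕ) :
    Measurable (birkhoffMax T h n) := by
  induction n with
  | zero => exact measurable_const
  | succ n ih => exact ih.max (measurable_birkhoffSum hT hh _)

end Measurability

namespace MeasureTheory.MeasurePreserving

variable {α : Type*} [MeasurableSpace α] {μ : Measure α} {T : α → α} {h : α → ℝ}

theorem integral_comp_of_aestronglyMeasurable
    (hT : MeasurePreserving T μ μ) {u : α → ℝ} (hu : AEStronglyMeasurable u μ) :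
    ∫ x, u (T x) ∂μ = ∫ x, u x ∂μ := by
  rw [← integral_map hT.aemeasurable (by rwa [hT.map_eq]), hT.map_eq]

theorem integral_comp_sub_eq_zero [IsFiniteMeasure μ] (hT : MeasurePreserving T μ μ) {f : α → ℝ}
    (hf : Measurable f) (hg : Integrable (f ∘ T - f) μ) : ∫ x, (f ∘ T - f) x ∂μ = 0 := by
  let trunc (M : ℕ) (y : ℝ) : ℝ := max (-M) (min y M)
  have htrunc_lip (M : ℕ) : LipschitzWith 1 (trunc M) := (LipschitzWith.id.min_const _).const_max _
  have htrunc_tendsto (y : ℝ) : Tendsto (trunc · y) atTop (𝓝 y) := by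
    refine tendsto_const_nhds.congr' ?_
    filter_upwards [tendsto_natCast_atTop_atTop.eventually_ge_atTop |y|] with M hM
    obtain ⟨hyl, hyu⟩ := abs_le.mp hM
    simp only [trunc, min_eq_left hyu, max_eq_right hyl]
  have hmeas (M : ℕ) : Measurable (trunc M ∘ f) := measurable_const.max (hf.min measurable_const)
  have hint (M : ℕ) : Integrable (trunc M ∘ f) μ :=
    .of_bound (hmeas M).aestronglyMeasurable M <| ae_of_all _ fun x => abs_le.2
      ⟨le_max_left _ _, max_le (neg_le_self M.cast_nonneg) (min_le_right _ _)⟩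
  have hzero (M : ℕ) : ∫ x, ((trunc M ∘ f) ∘ T - trunc M ∘ f) x ∂μ = 0 := by
    rw [integral_sub' (hT.integrable_comp_of_integrable (hint M)) (hint M), sub_eq_zero]
    exact hT.integral_comp_of_aestronglyMeasurable (hmeas M).aestronglyMeasurable
  have hlim := tendsto_integral_of_dominated_convergence (f := f ∘ T - f)
    (fun x => ‖(f ∘ T - f) x‖)
    (fun M => ((hmeas M).comp hT.measurable).sub (hmeas M) |>.aestronglyMeasurable) hg.norm
    (fun M => ae_of_all _ fun x => by
      simpa only [Real.norm_eq_abs, Pi.sub_apply, Function.comp_apply, ← Real.dist_eq,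
        NNReal.coe_one, one_mul]
        using (htrunc_lip M).dist_le_mul (f (T x)) (f x))
    (ae_of_all _ fun x => (htrunc_tendsto _).sub (htrunc_tendsto _))
  simp only [hzero] at hlim
  exact tendsto_nhds_unique hlim tendsto_const_nhds

theorem integrable_birkhoffSum (hT : MeasurePreserving T μ μ)
    (hh : Integrable h μ) (n : ℕ) : Integrable (birkhoffSum T h n) μ :=
  integrable_finsetSum _ fun k _ => (hT.iterate k).integrable_comp_of_integrable hh

theorem integrable_birkhoffMax (hT : MeasurePreserving T μ μ)
    (hh : Integrable h μ) (n : ℕ) : Integrable (birkhoffMax T h n) μ := by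
  induction n with
  | zero => exact integrable_zero _ _ _
  | succ n ih => exact ih.sup (hT.integrable_birkhoffSum hh _)

theorem setIntegral_birkhoffMax_pos_nonneg (hT : MeasurePreserving T μ μ)
    (hhm : Measurable h) (hh : Integrable h μ) (n : ℕ) :
    0 ≤ ∫ x in {x | 0 < birkhoffMax T h n x}, h x ∂μ := by
  set M := birkhoffMax T h n
  set E := {x | 0 < M x}
  have hMm : Measurable M := measurable_birkhoffMax hT.measurable hhm n
  have hM : Integrable M μ := hT.integrable_birkhoffMax hh n
  have hMT : Integrable (M ∘ T) μ := hT.integrable_comp_of_integrable hM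
  have hle : ∀ x ∈ E, M x - M (T x) ≤ h x := fun x (hx : 0 < M x) => by
    rcases le_max_iff.mp (birkhoffMax_le_max_zero_add n x) with h0 | hS
    · exact absurd hx h0.not_gt
    · linarith
  calc 0 = ∫ x, M x ∂μ - ∫ x, M (T x) ∂μ := by
        rw [hT.integral_comp_of_aestronglyMeasurable hMm.aestronglyMeasurable, sub_self]
    _ ≤ ∫ x in E, M x ∂μ - ∫ x in E, M (T x) ∂μ := by
        rw [setIntegral_eq_integral_of_forall_compl_eq_zero (s := E) (f := M) fun x hx =>
          le_antisymm (not_lt.mp hx) (birkhoffMax_nonneg n x)]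
        exact sub_le_sub_left (setIntegral_le_integral hMT
          (Eventually.of_forall fun x => birkhoffMax_nonneg n (T x))) _
    _ = ∫ x in E, (M x - M (T x)) ∂μ := (integral_sub hM.integrableOn hMT.integrableOn).symm
    _ ≤ ∫ x in E, h x ∂μ := setIntegral_mono_on (hM.sub hMT).integrableOn hh.integrableOn
        (measurableSet_lt measurable_const hMm) hle

theorem setIntegral_exists_birkhoffSum_pos_nonneg
    (hT : MeasurePreserving T μ μ) (hhm : Measurable h) (hh : Integrable h μ) :
    0 ≤ ∫ x in {x | ∃ n, 0 < birkhoffSum T h n x}, h x ∂μ := by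
  have hE : {x | ∃ n, 0 < birkhoffSum T h n x} = ⋃ n, {x | 0 < birkhoffMax T h n x} := by
    ext x
    simp only [mem_ofPred_eq, mem_iUnion, birkhoffMax_pos_iff]
    exact ⟨fun ⟨n, hn⟩ => ⟨n, n, le_rfl, hn⟩, fun ⟨_, k, _, hk⟩ => ⟨k, hk⟩⟩
  rw [hE]
  refine ge_of_tendsto (tendsto_setIntegral_of_monotone
    (fun n => measurableSet_lt measurable_const (measurable_birkhoffMax hT.measurable hhm n))
    (fun m n hmn x hx => hx.trans_le (birkhoffMax_mono x hmn)) hh.integrableOn)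
    (Eventually.of_forall (hT.setIntegral_birkhoffMax_pos_nonneg hhm hh))

theorem measure_forall_birkhoffSum_nonpos_ne_zero
    (hT : MeasurePreserving T μ μ) (hhm : Measurable h) (hh : Integrable h μ)
    (hneg : ∫ x, h x ∂μ < 0) : μ {x | ∀ n, birkhoffSum T h n x ≤ 0} ≠ 0 := by
  intro hnull
  have hE : {x | ∃ n, 0 < birkhoffSum T h n x} =ᵐ[μ] univ := by
    rw [ae_eq_univ]
    simpa only [compl_ofPred, not_exists, not_lt] using hnull
  have := hT.setIntegral_exists_birkhoffSum_pos_nonneg hhm hh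
  rw [Measure.restrict_congr_set hE, Measure.restrict_univ] at this
  linarith

end MeasureTheory.MeasurePreserving

theorem eventually_inv_mul_lt_of_bddAbove {u : ℕ → ℝ} {a c : ℝ} (hac : a < c)
    (hu : BddAbove (range fun n => u n - n * a)) : ∀ᶠ n : ℕ in atTop, (n : ℝ)⁻¹ * u n < c := by
  obtain ⟨C, hC⟩ := hu
  filter_upwards [eventually_gt_atTop 0,
    tendsto_natCast_atTop_atTop.eventually_gt_atTop (C / (c - a))] with n hn hnC
  have hun : u n - n * a ≤ C := hC (mem_range_self n)
  rw [div_lt_iff₀ (sub_pos.mpr hac)] at hnC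
  rw [inv_mul_lt_iff₀ (Nat.cast_pos.mpr hn)]
  nlinarith

theorem tendsto_of_forall_rat {ι : Type*} {l : Filter ι} {u : ι → ℝ} {L : ℝ}
    (hlo : ∀ q : ℚ, (q : ℝ) < L → ∀ᶠ i in l, (q : ℝ) < u i)
    (hup : ∀ q : ℚ, L < q → ∀ᶠ i in l, u i < q) : Tendsto u l (𝓝 L) := by
  refine tendsto_order.2 ⟨fun a ha => ?_, fun b hb => ?_⟩
  · obtain ⟨q, haq, hqL⟩ := exists_rat_btwn ha
    exact (hlo q hqL).mono fun _ hi => haq.trans hi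
  · obtain ⟨q, hLq, hqb⟩ := exists_rat_btwn hb
    exact (hup q hLq).mono fun _ hi => hi.trans hqb

namespace Ergodic

variable {α : Type*} [MeasurableSpace α] {μ : Measure α} [IsProbabilityMeasure μ] {T : α → α}
  {g : α → ℝ}

theorem ae_eventually_birkhoffAverage_lt (hT : Ergodic T μ) (hgm : Measurable g)
    (hg : Integrable g μ) {c : ℝ} (hc : ∫ x, g x ∂μ < c) :
    ∀ᵐ x ∂μ, ∀ᶠ n in atTop, birkhoffAverage ℝ T g n x < c := by
  obtain ⟨a, hga, hac⟩ := exists_between hc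
  set B := {x | BddAbove (range fun n : ℕ => birkhoffSum T g n x - n * a)}
  have hB : MeasurableSet B := measurableSet_bddAbove_range fun n =>
    (measurable_birkhoffSum hT.measurable hgm n).sub_const _
  have hsum_sub (n : ℕ) (x : α) :
      birkhoffSum T (g - fun _ => a) n x = birkhoffSum T g n x - n * a := by
    rw [birkhoffSum_sub, birkhoffSum_of_comp_eq (φ := fun _ : α => a) rfl, Pi.smul_apply,
      nsmul_eq_mul]
  have hA : μ {x | ∀ n, birkhoffSum T (g - fun _ => a) n x ≤ 0} ≠ 0 := by
    refine hT.toMeasurePreserving.measure_forall_birkhoffSum_nonpos_ne_zero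
      (hgm.sub measurable_const) (hg.sub (integrable_const a)) ?_
    show ∫ x, (g x - a) ∂μ < 0
    rw [integral_sub hg (integrable_const a), integral_const, probReal_univ, one_smul]
    linarith
  have hAB : {x | ∀ n, birkhoffSum T (g - fun _ => a) n x ≤ 0} ⊆ B := fun x hx =>
    ⟨0, forall_mem_range.2 fun n => hsum_sub n x ▸ hx n⟩
  -- `S_{n+1} x - (n+1) a = (g x - a) + (S_n (T x) - n a)`
  have hBinv : T ⁻¹' B ⊆ B := fun x ⟨C, hC⟩ => by
    refine ⟨max 0 (g x - a + C), forall_mem_range.2 fun n => ?_⟩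
    rcases n with _ | n
    · simp
    · have := hC (mem_range_self n)
      rw [birkhoffSum_succ']
      push_cast
      exact le_max_of_le_right (by linarith)
  rcases hT.ae_empty_or_univ_of_preimage_ae_le hB.nullMeasurableSet hBinv.eventuallyLE
    with hB0 | hB1
  · exact absurd (measure_mono_null hAB (ae_eq_empty.mp hB0)) hA
  · filter_upwards [ae_eq_univ.mp hB1 |> measure_eq_zero_iff_ae_notMem.mp] with x hx
    exact eventually_inv_mul_lt_of_bddAbove hac (not_not.mp hx)

theorem ae_tendsto_birkhoffAverage (hT : Ergodic T μ) (hg : Integrable g μ) :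
    ∀ᵐ x ∂μ, Tendsto (fun n => birkhoffAverage ℝ T g n x) atTop (𝓝 (∫ x, g x ∂μ)) := by
  have hup (φ : α → ℝ) (hφm : Measurable φ) (hφ : Integrable φ μ) : ∀ᵐ x ∂μ, ∀ q : ℚ,
      ∫ x, φ x ∂μ < q → ∀ᶠ n in atTop, birkhoffAverage ℝ T φ n x < q :=
    ae_all_iff.2 fun q => eventually_imp_distrib_left.2 fun hq =>
      hT.ae_eventually_birkhoffAverage_lt hφm hφ hq
  obtain ⟨g', hg'm, hgg'⟩ : ∃ g', Measurable g' ∧ g =ᵐ[μ] g' :=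
    ⟨_, hg.1.measurable_mk, hg.1.ae_eq_mk⟩
  have hg' : Integrable g' μ := hg.congr hgg'
  filter_upwards [hup g' hg'm hg', hup (-g') hg'm.neg hg'.neg, ae_all_iff.2 fun n =>
    hT.quasiMeasurePreserving.birkhoffAverage_ae_eq_of_ae_eq ℝ hgg' n] with x hxg hxng hx
  rw [funext hx, integral_congr_ae hgg']
  refine tendsto_of_forall_rat (fun q hq => ?_) hxg
  have := hxng (-q) (by simpa [integral_neg] using hq)
  simpa [birkhoffAverage_neg] using this

end Ergodic

theorem tendsto_along_orbit_div_n_zero_general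
    {Ω : Type} [MeasurableSpace Ω] (lam : Measure Ω) [IsProbabilityMeasure lam]
    (T : Ω → Ω) (hT : Ergodic T lam)
    (f : Ω → ℝ) (hf : Measurable f)
    (hg : Integrable (fun ω => f (T ω) - f ω) lam) :
    ∀ᵐ ω ∂lam, Tendsto (fun n : ℕ => f (T^[n] ω) / (n : ℝ)) atTop (nhds 0) := by
  have hint : ∫ ω, (f ∘ T - f) ω ∂lam = 0 := hT.toMeasurePreserving.integral_comp_sub_eq_zero hf hg
  filter_upwards [hT.ae_tendsto_birkhoffAverage (g := f ∘ T - f) hg] with ω hω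
  rw [hint] at hω
  have hsplit (n : ℕ) : f (T^[n] ω) / n = f ω / n + birkhoffAverage ℝ T (f ∘ T - f) n ω := by
    rw [birkhoffAverage, birkhoffSum_comp_sub, smul_eq_mul]
    ring
  simpa only [hsplit, zero_add] using (tendsto_const_div_atTop_nhds_zero_nat (f ω)).add hω

/-- Tiozzo's Lemma 7: If `T` is an ergodic measure-preserving
transformation of a probability space, `f ≥ 0` is measurable, and the
increment `g = f ∘ T - f` is integrable, then `f(T^n ω)/n → 0` almost
surely. -/
theorem tendsto_along_orbit_div_n_zero
    {Ω : Type} [MeasurableSpace Ω] (lam : Measure Ω) [IsProbabilityMeasure lam]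
    (T : Ω → Ω) (hT : Ergodic T lam)
    (f : Ω → ℝ) (hf : Measurable f) (hf_nonneg : ∀ ω, 0 ≤ f ω)
    (hg : Integrable (fun ω => f (T ω) - f ω) lam) :
    ∀ᵐ ω ∂lam, Tendsto (fun n : ℕ => f (T^[n] ω) / (n : ℝ)) atTop (nhds 0) :=
  tendsto_along_orbit_div_n_zero_general lam T hT f hf hg
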